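/- arXiv:1705.04953 — 6 statements merged into one kernel-verified Lean document; each statement's English description precedes it below -/
import Mathlib

section
/- Let γ > 0, θ ∈ (0, π/2), and let A_p ∈ ℝ^{n×n}, B_w ∈ ℝ^{n×m}, B_p ∈ ℝ^{n×p}, C_p ∈ ℝ^{q×n}, C_z ∈ ℝ^{r×n}, D_z ∈ ℝ^{r×m} be given plant matrices. Suppose there exist symmetric real n×n matrices S and R and real matrices Â ∈ ℝ^{n×n}, B̂ ∈ ℝ^{n×q}, Ĉ ∈ ℝ^{p×n} such that, with Φ₁ = A_p S + S A_pᵀ + B_p Ĉ + Ĉᵀ B_pᵀ, Φ₂ = A_pᵀ R + R A_p + B̂ C_p + C_pᵀ B̂ᵀ and Φ₃ = [[A_p S + B_p Ĉ, A_p],[Â, R A_p + B̂ C_p]], the following three matrix inequalities hold: (i) the symmetric block matrix [[Φ₁, Âᵀ + A_p, B_w, S C_zᵀ],[Â + A_pᵀ, Φ₂, R B_w, C_zᵀ],[B_wᵀ, B_wᵀ Rᵀ, −γI, D_zᵀ],[C_z S, C_z, D_z, −γI]] is negative definite; (ii) the block matrix [[sin θ·(Φ₃ + Φ₃ᵀ),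 cos θ·(Φ₃ − Φ₃ᵀ)],[cos θ·(Φ₃ᵀ − Φ₃), sin θ·(Φ₃ + Φ₃ᵀ)]] is negative definite; (iii) the block matrix [[S, I],[I, R]] is positive definite. Then there exist controller matrices A_c ∈ ℝ^{n×n}, B_c ∈ ℝ^{n×q}, C_c ∈ ℝ^{p×n} such that, for the closed-loop matrices A = [[A_p, B_p C_c],[B_c C_p, A_c]], B = [[B_w],[0]], C = [C_z 0], D = D_z: (a) every complex eigenvalue λ of A satisfies Re λ < 0 and cos θ·|Im λ| < sin θ·|Re λ| (i.e., λ lies in the open conic sector with apex at the origin and inner half-angle θ about the negative real axis), and (b) there exists a symmetric positive definite real matrix P with [[AᵀP + PA, PB, Cᵀ],[BᵀP, −γI, Dᵀ],[C, D, −γI]] negative definite. -/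
/-!
Following Scherer–Gahinet–Chilali, write the closed-loop Lyapunov matrix as `P = Π₂ Π₁⁻¹` with
`Π₁ = [[S, I], [I - R S, 0]]` and `Π₂ = [[I, R], [0, I]]`; the coupling LMI (iii) makes `I - R S`
invertible, so `Π₁` is invertible, and `Π₁ᵀ Π₂ = [[S, I], [I, R]]` is symmetric, hence so is `P`.
The controller is read off from `Â, B̂, Ĉ` so that `Π₂ᵀ A Π₁ = Φ₃`, which makes the congruence
transforms of the closed-loop analysis LMIs by `Π₁` exactly the synthesis LMIs (i)–(iii).
For the pole-placement part, an eigenvector `v` of `A` with eigenvalue `λ` and the test vector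
`(v, i t v)` turn the sector LMI into `sin θ · Re λ · (1 + t²) - 2 cos θ · Im λ · t < 0` for all
real `t`, which says that `λ` lies in the sector.
-/

open Matrix

/-- A real matrix is negative definite (in the quadratic-form sense):
`xᵀ M x < 0` for all nonzero real vectors `x`. -/
def Matrix.NegDefR {ι : Type*} [Fintype ι] (M : Matrix ι ι ℝ) : Prop :=
  ∀ x : ι → ℝ, x ≠ 0 → x ⬝ᵥ M *ᵥ x < 0

/-- A real matrix is positive definite (in the quadratic-form sense):
`xᵀ M x > 0` for all nonzero real vectors `x`. -/
def Matrix.PosDefR {ι : Type*} [Fintype ι] (M : Matrix ι ι ℝ) : Prop :=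
  ∀ x : ι → ℝ, x ≠ 0 → 0 < x ⬝ᵥ M *ᵥ x

open Complex

theorem neg_and_abs_lt_of_forall_quadratic_neg {s c x y : ℝ} (hs : 0 < s)
    (h : ∀ t : ℝ, s * x * (1 + t ^ 2) - 2 * c * y * t < 0) : x < 0 ∧ c * |y| < s * |x| := by
  have hsx : s * x < 0 := by simpa using h 0
  refine ⟨neg_of_mul_neg_right hsx hs.le, ?_⟩
  -- evaluate at the maximiser `t = c y / (s x)` of the concave quadratic
  set t := c * y / (s * x)
  have ht : t * (s * x) = c * y := div_mul_cancel₀ _ hsx.ne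
  have hsq : (c * y) ^ 2 < (s * x) ^ 2 := by
    nlinarith [mul_pos_of_neg_of_neg hsx (h t)]
  calc c * |y| ≤ |c * y| := by rw [abs_mul]; gcongr; exact le_abs_self c
    _ < |s * x| := sq_lt_sq.mp hsq
    _ = s * |x| := by rw [abs_mul, abs_of_pos hs]

namespace Matrix

variable {ι κ : Type*}

theorem fromBlocks_conj_blockDiagonal {α l m n o : Type*} [Semiring α] [Fintype l] [Fintype m]
    (W : Matrix l n α) (W' : Matrix m o α) (A : Matrix l l α) (B : Matrix l m α)
    (C : Matrix m l α) (D : Matrix m m α) :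
    (fromBlocks W 0 0 W')ᵀ * fromBlocks A B C D * fromBlocks W 0 0 W' =
      fromBlocks (Wᵀ * A * W) (Wᵀ * B * W') (W'ᵀ * C * W) (W'ᵀ * D * W') := by
  simp [fromBlocks_transpose, fromBlocks_multiply]

theorem IsSymm.mul_nonsing_inv_of_transpose_mul {α : Type*} [CommRing α] [Fintype ι]
    [DecidableEq ι] {X Y : Matrix ι ι α} (hX : IsUnit X.det) (h : (Xᵀ * Y).IsSymm) :
    (Y * X⁻¹).IsSymm := by
  have hY : Y * X⁻¹ = X⁻¹ᵀ * (Xᵀ * Y) * X⁻¹ := by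
    rw [← Matrix.mul_assoc, ← transpose_mul, mul_nonsing_inv X hX, transpose_one,
      Matrix.one_mul]
  rw [hY, IsSymm, transpose_mul, transpose_mul, h.eq, transpose_transpose]
  simp only [Matrix.mul_assoc]

/-- The Chilali–Gahinet LMI region of the conic sector of half-angle `θ` about the negative real
axis, evaluated at `X = P A`. -/
noncomputable def sectorMatrix (θ : ℝ) (X : Matrix ι ι ℝ) : Matrix (ι ⊕ ι) (ι ⊕ ι) ℝ :=
  fromBlocks (Real.sin θ • (X + Xᵀ)) (Real.cos θ • (X - Xᵀ))
    (Real.cos θ • (Xᵀ - X)) (Real.sin θ • (Xᵀ + X))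

theorem sectorMatrix_map_ofReal (θ : ℝ) (X : Matrix ι ι ℝ) :
    (sectorMatrix θ X).map ofReal =
      fromBlocks (Real.sin θ • (X.map ofReal + (X.map ofReal)ᴴ))
        (Real.cos θ • (X.map ofReal - (X.map ofReal)ᴴ))
        (Real.cos θ • ((X.map ofReal)ᴴ - X.map ofReal))
        (Real.sin θ • ((X.map ofReal)ᴴ + X.map ofReal)) := by
  rw [sectorMatrix, fromBlocks_map]
  congr 1 <;> ext <;> simp [mul_sub]

variable [Fintype ι]

theorem sectorMatrix_conj (θ : ℝ) (X : Matrix ι ι ℝ) (T : Matrix ι κ ℝ) :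
    (fromBlocks T 0 0 T)ᵀ * sectorMatrix θ X * fromBlocks T 0 0 T =
      sectorMatrix θ (Tᵀ * X * T) := by
  rw [sectorMatrix, fromBlocks_conj_blockDiagonal, sectorMatrix]
  simp only [Matrix.mul_smul, Matrix.smul_mul, Matrix.mul_add, Matrix.add_mul, Matrix.mul_sub,
    Matrix.sub_mul, transpose_mul, transpose_transpose, Matrix.mul_assoc]

/-- The bounded-real-lemma matrix of `(A, B, C, D)` with storage function `P`. -/
def hinfMatrix {ω ρ : Type*} [DecidableEq ω] [DecidableEq ρ] (γ : ℝ)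
    (A : Matrix ι ι ℝ) (B : Matrix ι ω ℝ) (C : Matrix ρ ι ℝ) (D : Matrix ρ ω ℝ)
    (P : Matrix ι ι ℝ) : Matrix ((ι ⊕ ω) ⊕ ρ) ((ι ⊕ ω) ⊕ ρ) ℝ :=
  fromBlocks (fromBlocks (Aᵀ * P + P * A) (P * B) (Bᵀ * P) (-(γ • 1)))
    (fromRows Cᵀ Dᵀ) (fromCols C D) (-(γ • 1))

theorem hinfMatrix_conj {ω ρ : Type*} [Fintype ω] [DecidableEq ω] [Fintype ρ] [DecidableEq ρ]
    (γ : ℝ) (A : Matrix ι ι ℝ) (B : Matrix ι ω ℝ) (C : Matrix ρ ι ℝ) (D : Matrix ρ ω ℝ)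
    (P : Matrix ι ι ℝ) (T : Matrix ι κ ℝ) :
    (fromBlocks (fromBlocks T 0 0 1) 0 0 1 : Matrix ((ι ⊕ ω) ⊕ ρ) ((κ ⊕ ω) ⊕ ρ) ℝ)ᵀ *
        hinfMatrix γ A B C D P *
        (fromBlocks (fromBlocks T 0 0 1) 0 0 1 : Matrix ((ι ⊕ ω) ⊕ ρ) ((κ ⊕ ω) ⊕ ρ) ℝ) =
      fromBlocks (fromBlocks (Tᵀ * (Aᵀ * P + P * A) * T) (Tᵀ * (P * B)) (Bᵀ * P * T) (-(γ • 1)))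
        (fromRows (Tᵀ * Cᵀ) Dᵀ) (fromCols (C * T) D) (-(γ • 1)) := by
  rw [hinfMatrix, fromBlocks_conj_blockDiagonal, fromBlocks_conj_blockDiagonal]
  simp [fromBlocks_transpose, fromBlocks_mul_fromRows, fromCols_mul_fromBlocks]

theorem mulVec_dotProduct_mulVec_mulVec [Fintype κ] (M : Matrix ι ι ℝ) (W : Matrix ι κ ℝ)
    (y : κ → ℝ) : W *ᵥ y ⬝ᵥ M *ᵥ (W *ᵥ y) = y ⬝ᵥ (Wᵀ * M * W) *ᵥ y := by
  rw [mulVec_mulVec, dotProduct_mulVec, ← vecMul_transpose, vecMul_vecMul,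
    ← dotProduct_mulVec, Matrix.mul_assoc]

theorem PosDefR.of_transpose_mul_mul [Fintype κ] {M : Matrix ι ι ℝ} {W : Matrix ι κ ℝ}
    (hW : Function.Surjective W.mulVec) (h : (Wᵀ * M * W).PosDefR) : M.PosDefR := by
  intro x hx
  obtain ⟨y, rfl⟩ := hW x
  rw [mulVec_dotProduct_mulVec_mulVec]
  exact h y (by rintro rfl; exact hx (mulVec_zero W))

theorem NegDefR.of_transpose_mul_mul [Fintype κ] {M : Matrix ι ι ℝ} {W : Matrix ι κ ℝ}
    (hW : Function.Surjective W.mulVec) (h : (Wᵀ * M * W).NegDefR) : M.NegDefR := by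
  intro x hx
  obtain ⟨y, rfl⟩ := hW x
  rw [mulVec_dotProduct_mulVec_mulVec]
  exact h y (by rintro rfl; exact hx (mulVec_zero W))

theorem PosDefR.eq_zero_of_mulVec_eq_zero {M : Matrix ι ι ℝ} (h : M.PosDefR) {x : ι → ℝ}
    (hx : M *ᵥ x = 0) : x = 0 := by
  by_contra hne
  simpa [hx] using h x hne

theorem isUnit_one_sub_mul_of_posDefR [DecidableEq ι] {S R : Matrix ι ι ℝ}
    (h : (fromBlocks S 1 1 R).PosDefR) : IsUnit (1 - R * S) := by
  refine (isUnit_iff_isUnit_det _).mpr (isUnit_iff_ne_zero.mpr fun hdet => ?_)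
  obtain ⟨v, hv, hNv⟩ := exists_mulVec_eq_zero_iff.mpr hdet
  have hRSv : R *ᵥ (S *ᵥ v) = v := by
    rw [sub_mulVec, one_mulVec, sub_eq_zero] at hNv
    rw [mulVec_mulVec, ← hNv]
  -- `(-v, S v)` lies in the kernel of the coupling matrix
  have hker := h.eq_zero_of_mulVec_eq_zero (x := Sum.elim (-v) (S *ᵥ v))
    (by simp [fromBlocks_mulVec, mulVec_neg, hRSv])
  exact hv (neg_eq_zero.mp (by simpa using congrArg (· ∘ Sum.inl) hker))

theorem PosDefR.neg {M : Matrix ι ι ℝ} (h : M.PosDefR) : (-M).NegDefR := by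
  intro x hx
  simpa [neg_mulVec] using h x hx

theorem NegDefR.dotProduct_mulVec_nonpos {M : Matrix ι ι ℝ} (h : M.NegDefR) (x : ι → ℝ) :
    x ⬝ᵥ M *ᵥ x ≤ 0 := by
  rcases eq_or_ne x 0 with rfl | hx
  · simp
  · exact (h x hx).le

theorem NegDefR.add_dotProduct_mulVec_neg {M : Matrix ι ι ℝ} (h : M.NegDefR) {x y : ι → ℝ}
    (hxy : x ≠ 0 ∨ y ≠ 0) : x ⬝ᵥ M *ᵥ x + y ⬝ᵥ M *ᵥ y < 0 := by
  rcases hxy with hx | hy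
  · exact add_lt_of_lt_of_nonpos (h x hx) (h.dotProduct_mulVec_nonpos y)
  · exact add_lt_of_nonpos_of_lt (h.dotProduct_mulVec_nonpos x) (h y hy)

theorem re_star_dotProduct_map_ofReal_mulVec (M : Matrix ι ι ℝ) (z : ι → ℂ) :
    (star z ⬝ᵥ M.map ofReal *ᵥ z).re =
      (re ∘ z) ⬝ᵥ M *ᵥ (re ∘ z) + (im ∘ z) ⬝ᵥ M *ᵥ (im ∘ z) := by
  simp only [dotProduct, mulVec, Finset.mul_sum, re_sum, ← Finset.sum_add_distrib]
  refine Finset.sum_congr rfl fun i _ => Finset.sum_congr rfl fun j _ => ?_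
  simp [mul_re]

theorem NegDefR.re_star_dotProduct_neg {M : Matrix ι ι ℝ} (h : M.NegDefR) {z : ι → ℂ}
    (hz : z ≠ 0) : (star z ⬝ᵥ M.map ofReal *ᵥ z).re < 0 := by
  rw [re_star_dotProduct_map_ofReal_mulVec]
  refine h.add_dotProduct_mulVec_neg (not_and_or.mp fun h0 => hz ?_)
  funext i
  exact Complex.ext (congrFun h0.1 i) (congrFun h0.2 i)

theorem PosDefR.re_star_dotProduct_pos {M : Matrix ι ι ℝ} (h : M.PosDefR) {z : ι → ℂ}
    (hz : z ≠ 0) : 0 < (star z ⬝ᵥ M.map ofReal *ᵥ z).re := by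
  simpa [Matrix.map_neg, neg_mulVec] using h.neg.re_star_dotProduct_neg hz

theorem star_dotProduct_conjTranspose_mulVec {α : Type*} [CommSemiring α] [StarRing α]
    (Y : Matrix ι ι α) (v : ι → α) : star v ⬝ᵥ Yᴴ *ᵥ v = star (star v ⬝ᵥ Y *ᵥ v) := by
  rw [star_dotProduct, star_mulVec, conjTranspose_conjTranspose, dotProduct_mulVec]

theorem re_star_dotProduct_sectorMatrix_mulVec (θ : ℝ) (X : Matrix ι ι ℝ) (v : ι → ℂ) (t : ℝ) :
    (star (Sum.elim v ((t * I) • v)) ⬝ᵥ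
        (sectorMatrix θ X).map ofReal *ᵥ Sum.elim v ((t * I) • v)).re =
      2 * (Real.sin θ * (1 + t ^ 2) * (star v ⬝ᵥ X.map ofReal *ᵥ v).re -
        2 * Real.cos θ * t * (star v ⬝ᵥ X.map ofReal *ᵥ v).im) := by
  rw [sectorMatrix_map_ofReal, Function.star_sumElim, fromBlocks_mulVec,
    sumElim_dotProduct_sumElim]
  simp only [Sum.elim_comp_inl, Sum.elim_comp_inr, mulVec_smul, smul_mulVec, add_mulVec,
    sub_mulVec, dotProduct_add, dotProduct_sub, dotProduct_smul, star_smul, smul_dotProduct,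
    star_dotProduct_conjTranspose_mulVec]
  generalize star v ⬝ᵥ X.map ofReal *ᵥ v = a
  generalize Real.sin θ = s
  generalize Real.cos θ = c
  simp only [Complex.star_def, map_mul, conj_ofReal, conj_I, real_smul, smul_eq_mul, add_re,
    add_im, sub_re, sub_im, neg_re, neg_im, mul_re, mul_im, ofReal_re, ofReal_im, I_re, I_im,
    conj_re, conj_im]
  ring

theorem re_neg_and_abs_im_lt_of_sectorMatrix [DecidableEq ι] {A P : Matrix ι ι ℝ} {θ : ℝ}
    (hθ : 0 < Real.sin θ) (hP : Pᵀ = P) (hPpos : P.PosDefR)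
    (h : (sectorMatrix θ (P * A)).NegDefR) {lam : ℂ}
    (hlam : (lam • (1 : Matrix ι ι ℂ) - A.map ofReal).det = 0) :
    lam.re < 0 ∧ Real.cos θ * |lam.im| < Real.sin θ * |lam.re| := by
  obtain ⟨v, hv0, hv⟩ := exists_mulVec_eq_zero_iff.mpr hlam
  have hAv : A.map ofReal *ᵥ v = lam • v := by
    rw [sub_mulVec, smul_mulVec, one_mulVec, sub_eq_zero] at hv
    exact hv.symm
  set p := star v ⬝ᵥ P.map ofReal *ᵥ v
  have hp_re : 0 < p.re := hPpos.re_star_dotProduct_pos hv0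
  have hp_im : p.im = 0 := by
    have hself : (P.map ofReal)ᴴ = P.map ofReal := by
      conv_rhs => rw [← hP]
      ext; simp
    have := star_dotProduct_conjTranspose_mulVec (P.map ofReal) v
    rw [hself] at this
    exact conj_eq_iff_im.mp this.symm
  have hPA : star v ⬝ᵥ (P * A).map ofReal *ᵥ v = lam * p := by
    rw [show (P * A).map ofReal = P.map ofReal * A.map ofReal from Matrix.map_mul (f := ofRealHom),
      ← mulVec_mulVec, hAv, mulVec_smul, dotProduct_smul, smul_eq_mul]
  refine neg_and_abs_lt_of_forall_quadratic_neg hθ fun t => ?_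
  have hζ : Sum.elim v ((t * I) • v) ≠ 0 := fun h0 => hv0 (funext fun i => congrFun h0 (.inl i))
  have hform := h.re_star_dotProduct_neg hζ
  rw [re_star_dotProduct_sectorMatrix_mulVec, hPA, mul_re, mul_im, hp_im] at hform
  exact neg_of_mul_neg_right (a := 2 * p.re) (by linarith) (by positivity)

end Matrix

namespace OutputFeedback

variable {ι κ μ ω ρ : Type*} [Fintype ι] [Fintype κ] [Fintype μ] (γ : ℝ)
  (Ap : Matrix ι ι ℝ) (Bw : Matrix ι ω ℝ) (Bp : Matrix ι κ ℝ) (Cp : Matrix μ ι ℝ)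
  (Cz : Matrix ρ ι ℝ) (Dz : Matrix ρ ω ℝ)
  (S R Ahat : Matrix ι ι ℝ) (Bhat : Matrix ι μ ℝ) (Chat : Matrix κ ι ℝ)

/-- The matrix `Φ₃ = Π₂ᵀ A Π₁` of the synthesis LMIs, affine in the new variables. -/
def transformedClosedLoop : Matrix (ι ⊕ ι) (ι ⊕ ι) ℝ :=
  fromBlocks (Ap * S + Bp * Chat) Ap Ahat (R * Ap + Bhat * Cp)

variable {Ap Bp Cp S R Ahat Bhat Chat} in
theorem transpose_add_transformedClosedLoop (hS : Sᵀ = S) (hR : Rᵀ = R) :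
    (transformedClosedLoop Ap Bp Cp S R Ahat Bhat Chat)ᵀ +
        transformedClosedLoop Ap Bp Cp S R Ahat Bhat Chat =
      fromBlocks (Ap * S + S * Apᵀ + Bp * Chat + Chatᵀ * Bpᵀ) (Ahatᵀ + Ap) (Ahat + Apᵀ)
        (Apᵀ * R + R * Ap + Bhat * Cp + Cpᵀ * Bhatᵀ) := by
  simp only [transformedClosedLoop, fromBlocks_transpose, fromBlocks_add, transpose_add,
    transpose_mul, hS, hR]
  congr 1 <;> abel

variable [DecidableEq ι] [DecidableEq ω] [DecidableEq ρ]

def Pi₁ : Matrix (ι ⊕ ι) (ι ⊕ ι) ℝ := fromBlocks S 1 (1 - R * S) 0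

def Pi₂ : Matrix (ι ⊕ ι) (ι ⊕ ι) ℝ := fromBlocks 1 R 0 1

noncomputable def lyapunovMatrix : Matrix (ι ⊕ ι) (ι ⊕ ι) ℝ := Pi₂ R * (Pi₁ S R)⁻¹

noncomputable def controllerC : Matrix κ ι ℝ := Chat * (1 - R * S)⁻¹

noncomputable def controllerA : Matrix ι ι ℝ :=
  (Ahat - R * Ap * S - Bhat * Cp * S - R * Bp * Chat) * (1 - R * S)⁻¹

noncomputable def closedLoop : Matrix (ι ⊕ ι) (ι ⊕ ι) ℝ :=
  fromBlocks Ap (Bp * controllerC S R Chat) (Bhat * Cp) (controllerA Ap Bp Cp S R Ahat Bhat Chat)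

def hinfSynthesisMatrix :
    Matrix (((ι ⊕ ι) ⊕ ω) ⊕ ρ) (((ι ⊕ ι) ⊕ ω) ⊕ ρ) ℝ :=
  fromBlocks
    (fromBlocks
      (fromBlocks (Ap * S + S * Apᵀ + Bp * Chat + Chatᵀ * Bpᵀ) (Ahatᵀ + Ap) (Ahat + Apᵀ)
        (Apᵀ * R + R * Ap + Bhat * Cp + Cpᵀ * Bhatᵀ))
      (fromRows Bw (R * Bw)) (fromCols Bwᵀ (Bwᵀ * Rᵀ)) (-(γ • 1)))
    (fromRows (fromRows (S * Czᵀ) Czᵀ) Dzᵀ) (fromCols (fromCols (Cz * S) Cz) Dz) (-(γ • 1))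

variable {γ Ap Bw Bp Cp Cz Dz S R Ahat Bhat Chat}

theorem isUnit_Pi₁ (hN : IsUnit (1 - R * S)) : IsUnit (Pi₁ S R) := by
  have hN' := (isUnit_iff_isUnit_det _).mp hN
  refine (isUnit_iff_isUnit_det _).mpr (isUnit_det_of_right_inverse
    (B := fromBlocks 0 (1 - R * S)⁻¹ 1 (-(S * (1 - R * S)⁻¹))) ?_)
  rw [Pi₁, fromBlocks_multiply, ← fromBlocks_one]
  simp [mul_nonsing_inv _ hN']

theorem lyapunovMatrix_mul_Pi₁ (hN : IsUnit (1 - R * S)) :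
    lyapunovMatrix S R * Pi₁ S R = Pi₂ R :=
  nonsing_inv_mul_cancel_right _ _ ((isUnit_iff_isUnit_det _).mp (isUnit_Pi₁ hN))

theorem transpose_Pi₁_mul_Pi₂ (hS : Sᵀ = S) (hR : Rᵀ = R) :
    (Pi₁ S R)ᵀ * Pi₂ R = fromBlocks S 1 1 R := by
  rw [Pi₁, Pi₂, fromBlocks_transpose, fromBlocks_multiply]
  simp [transpose_sub, transpose_mul, hS, hR]

theorem lyapunovMatrix_isSymm (hN : IsUnit (1 - R * S)) (hS : Sᵀ = S) (hR : Rᵀ = R) :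
    (lyapunovMatrix S R).IsSymm := by
  refine IsSymm.mul_nonsing_inv_of_transpose_mul ((isUnit_iff_isUnit_det _).mp (isUnit_Pi₁ hN)) ?_
  rw [transpose_Pi₁_mul_Pi₂ hS hR]
  exact IsSymm.fromBlocks hS transpose_one hR

theorem transpose_Pi₁_mul_lyapunovMatrix (hN : IsUnit (1 - R * S)) (hS : Sᵀ = S) (hR : Rᵀ = R) :
    (Pi₁ S R)ᵀ * lyapunovMatrix S R = (Pi₂ R)ᵀ := by
  rw [← lyapunovMatrix_mul_Pi₁ hN, transpose_mul, lyapunovMatrix_isSymm hN hS hR]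

theorem transpose_Pi₂_mul_closedLoop_mul_Pi₁ (hN : IsUnit (1 - R * S)) (hR : Rᵀ = R) :
    (Pi₂ R)ᵀ * closedLoop Ap Bp Cp S R Ahat Bhat Chat * Pi₁ S R =
      transformedClosedLoop Ap Bp Cp S R Ahat Bhat Chat := by
  rw [Pi₁, Pi₂, closedLoop, controllerA, controllerC, transformedClosedLoop, fromBlocks_transpose,
    hR, fromBlocks_multiply, fromBlocks_multiply]
  simp [Matrix.add_mul, Matrix.mul_assoc, nonsing_inv_mul _ ((isUnit_iff_isUnit_det _).mp hN)]

theorem transpose_Pi₁_mul_lyapunovMatrix_mul_closedLoop_mul_Pi₁ (hN : IsUnit (1 - R * S))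
    (hS : Sᵀ = S) (hR : Rᵀ = R) :
    (Pi₁ S R)ᵀ * (lyapunovMatrix S R * closedLoop Ap Bp Cp S R Ahat Bhat Chat) * Pi₁ S R =
      transformedClosedLoop Ap Bp Cp S R Ahat Bhat Chat := by
  rw [← Matrix.mul_assoc, transpose_Pi₁_mul_lyapunovMatrix hN hS hR,
    transpose_Pi₂_mul_closedLoop_mul_Pi₁ hN hR]

theorem hinfMatrix_closedLoop_conj [Fintype ω] [Fintype ρ] (hN : IsUnit (1 - R * S))
    (hS : Sᵀ = S) (hR : Rᵀ = R) :
    (fromBlocks (fromBlocks (Pi₁ S R) 0 0 1) 0 0 1 :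
        Matrix (((ι ⊕ ι) ⊕ ω) ⊕ ρ) (((ι ⊕ ι) ⊕ ω) ⊕ ρ) ℝ)ᵀ *
        hinfMatrix γ (closedLoop Ap Bp Cp S R Ahat Bhat Chat) (fromRows Bw (0 : Matrix ι ω ℝ))
          (fromCols Cz (0 : Matrix ρ ι ℝ)) Dz (lyapunovMatrix S R) *
        (fromBlocks (fromBlocks (Pi₁ S R) 0 0 1) 0 0 1 :
          Matrix (((ι ⊕ ι) ⊕ ω) ⊕ ρ) (((ι ⊕ ι) ⊕ ω) ⊕ ρ) ℝ) =
      hinfSynthesisMatrix γ Ap Bw Bp Cp Cz Dz S R Ahat Bhat Chat := by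
  have hP : (lyapunovMatrix S R)ᵀ = lyapunovMatrix S R := lyapunovMatrix_isSymm hN hS hR
  have hA : (Pi₁ S R)ᵀ * ((closedLoop Ap Bp Cp S R Ahat Bhat Chat)ᵀ * lyapunovMatrix S R +
        lyapunovMatrix S R * closedLoop Ap Bp Cp S R Ahat Bhat Chat) * Pi₁ S R =
      (transformedClosedLoop Ap Bp Cp S R Ahat Bhat Chat)ᵀ +
        transformedClosedLoop Ap Bp Cp S R Ahat Bhat Chat := by
    rw [Matrix.mul_add, Matrix.add_mul,
      ← transpose_Pi₁_mul_lyapunovMatrix_mul_closedLoop_mul_Pi₁ hN hS hR]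
    simp only [transpose_mul, transpose_transpose, hP, Matrix.mul_assoc]
  have hB : (Pi₁ S R)ᵀ * (lyapunovMatrix S R * fromRows Bw (0 : Matrix ι ω ℝ)) =
      fromRows Bw (R * Bw) := by
    rw [← Matrix.mul_assoc, transpose_Pi₁_mul_lyapunovMatrix hN hS hR, Pi₂, fromBlocks_transpose,
      fromBlocks_mul_fromRows]
    simp [hR]
  have hBt : (fromRows Bw (0 : Matrix ι ω ℝ))ᵀ * lyapunovMatrix S R * Pi₁ S R =
      fromCols Bwᵀ (Bwᵀ * Rᵀ) := by
    rw [Matrix.mul_assoc, lyapunovMatrix_mul_Pi₁ hN, Pi₂, transpose_fromRows,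
      fromCols_mul_fromBlocks]
    simp [hR]
  have hC : fromCols Cz (0 : Matrix ρ ι ℝ) * Pi₁ S R = fromCols (Cz * S) Cz := by
    rw [Pi₁, fromCols_mul_fromBlocks]
    simp
  have hCt : (Pi₁ S R)ᵀ * (fromCols Cz (0 : Matrix ρ ι ℝ))ᵀ = fromRows (S * Czᵀ) Czᵀ := by
    rw [← transpose_mul, hC, transpose_fromCols, transpose_mul, hS]
  rw [hinfMatrix_conj, hA, hB, hBt, hC, hCt, transpose_add_transformedClosedLoop hS hR]
  rfl

theorem lyapunovMatrix_posDefR (hN : IsUnit (1 - R * S)) (hS : Sᵀ = S) (hR : Rᵀ = R)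
    (h : (fromBlocks S 1 1 R).PosDefR) : (lyapunovMatrix S R).PosDefR := by
  refine PosDefR.of_transpose_mul_mul (mulVec_surjective_iff_isUnit.mpr (isUnit_Pi₁ hN)) ?_
  rwa [Matrix.mul_assoc, lyapunovMatrix_mul_Pi₁ hN, transpose_Pi₁_mul_Pi₂ hS hR]

theorem sectorMatrix_closedLoop_negDefR {θ : ℝ} (hN : IsUnit (1 - R * S)) (hS : Sᵀ = S)
    (hR : Rᵀ = R)
    (h : (sectorMatrix θ (transformedClosedLoop Ap Bp Cp S R Ahat Bhat Chat)).NegDefR) :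
    (sectorMatrix θ (lyapunovMatrix S R * closedLoop Ap Bp Cp S R Ahat Bhat Chat)).NegDefR := by
  refine NegDefR.of_transpose_mul_mul (W := fromBlocks (Pi₁ S R) 0 0 (Pi₁ S R))
    (mulVec_surjective_iff_isUnit.mpr (by simp [isUnit_Pi₁ hN])) ?_
  rwa [sectorMatrix_conj, transpose_Pi₁_mul_lyapunovMatrix_mul_closedLoop_mul_Pi₁ hN hS hR]

theorem hinfMatrix_closedLoop_negDefR [Fintype ω] [Fintype ρ] (hN : IsUnit (1 - R * S))
    (hS : Sᵀ = S) (hR : Rᵀ = R)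
    (h : (hinfSynthesisMatrix γ Ap Bw Bp Cp Cz Dz S R Ahat Bhat Chat).NegDefR) :
    (hinfMatrix γ (closedLoop Ap Bp Cp S R Ahat Bhat Chat) (fromRows Bw (0 : Matrix ι ω ℝ))
      (fromCols Cz (0 : Matrix ρ ι ℝ)) Dz (lyapunovMatrix S R)).NegDefR := by
  refine NegDefR.of_transpose_mul_mul (W := (fromBlocks (fromBlocks (Pi₁ S R) 0 0 1) 0 0 1 :
      Matrix (((ι ⊕ ι) ⊕ ω) ⊕ ρ) (((ι ⊕ ι) ⊕ ω) ⊕ ρ) ℝ))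
    (mulVec_surjective_iff_isUnit.mpr (by simp [isUnit_Pi₁ hN])) ?_
  rwa [hinfMatrix_closedLoop_conj hN hS hR]

end OutputFeedback

theorem stmt_0_general (n m p q r : ℕ) (γ θ : ℝ) (hθ₁ : 0 < θ) (hθ₂ : θ < Real.pi / 2)
    (Ap : Matrix (Fin n) (Fin n) ℝ) (Bw : Matrix (Fin n) (Fin m) ℝ)
    (Bp : Matrix (Fin n) (Fin p) ℝ) (Cp : Matrix (Fin q) (Fin n) ℝ)
    (Cz : Matrix (Fin r) (Fin n) ℝ) (Dz : Matrix (Fin r) (Fin m) ℝ)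
    (S R Ahat : Matrix (Fin n) (Fin n) ℝ) (Bhat : Matrix (Fin n) (Fin q) ℝ)
    (Chat : Matrix (Fin p) (Fin n) ℝ)
    (hSsymm : Sᵀ = S) (hRsymm : Rᵀ = R)
    -- (i) the H∞ synthesis LMI, with Φ₁ = A_p S + S A_pᵀ + B_p Ĉ + Ĉᵀ B_pᵀ and
    --     Φ₂ = A_pᵀ R + R A_p + B̂ C_p + C_pᵀ B̂ᵀ
    (hLMI₁ : (fromBlocks
        (fromBlocks
          (fromBlocks
            (Ap * S + S * Apᵀ + Bp * Chat + Chatᵀ * Bpᵀ)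
            (Ahatᵀ + Ap)
            (Ahat + Apᵀ)
            (Apᵀ * R + R * Ap + Bhat * Cp + Cpᵀ * Bhatᵀ))
          (fromRows Bw (R * Bw))
          (fromCols Bwᵀ (Bwᵀ * Rᵀ))
          (-(γ • (1 : Matrix (Fin m) (Fin m) ℝ))))
        (fromRows (fromRows (S * Czᵀ) Czᵀ) Dzᵀ)
        (fromCols (fromCols (Cz * S) Cz) Dz)
        (-(γ • (1 : Matrix (Fin r) (Fin r) ℝ)))).NegDefR)
    -- (ii) the conic-sector pole-placement LMI, with
    --     Φ₃ = [[A_p S + B_p Ĉ, A_p],[Â, R A_p + B̂ C_p]]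
    (hLMI₂ : (fromBlocks
        (Real.sin θ •
          (fromBlocks (Ap * S + Bp * Chat) Ap Ahat (R * Ap + Bhat * Cp) +
            (fromBlocks (Ap * S + Bp * Chat) Ap Ahat (R * Ap + Bhat * Cp))ᵀ))
        (Real.cos θ •
          (fromBlocks (Ap * S + Bp * Chat) Ap Ahat (R * Ap + Bhat * Cp) -
            (fromBlocks (Ap * S + Bp * Chat) Ap Ahat (R * Ap + Bhat * Cp))ᵀ))
        (Real.cos θ •
          ((fromBlocks (Ap * S + Bp * Chat) Ap Ahat (R * Ap + Bhat * Cp))ᵀ -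
            fromBlocks (Ap * S + Bp * Chat) Ap Ahat (R * Ap + Bhat * Cp)))
        (Real.sin θ •
          ((fromBlocks (Ap * S + Bp * Chat) Ap Ahat (R * Ap + Bhat * Cp))ᵀ +
            fromBlocks (Ap * S + Bp * Chat) Ap Ahat (R * Ap + Bhat * Cp)))).NegDefR)
    -- (iii) the coupling LMI
    (hLMI₃ : (fromBlocks S (1 : Matrix (Fin n) (Fin n) ℝ) 1 R).PosDefR) :
    ∃ (Ac : Matrix (Fin n) (Fin n) ℝ) (Bc : Matrix (Fin n) (Fin q) ℝ)
      (Cc : Matrix (Fin p) (Fin n) ℝ),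
      -- (a) regional pole placement of the closed-loop eigenvalues
      (∀ lam : ℂ,
        (lam • (1 : Matrix (Fin n ⊕ Fin n) (Fin n ⊕ Fin n) ℂ) -
            (fromBlocks Ap (Bp * Cc) (Bc * Cp) Ac).map Complex.ofReal).det = 0 →
        lam.re < 0 ∧ Real.cos θ * |lam.im| < Real.sin θ * |lam.re|) ∧
      -- (b) the LMI characterization of the closed-loop H∞ norm bound ‖T_zw‖∞ ≤ γ
      (∃ P : Matrix (Fin n ⊕ Fin n) (Fin n ⊕ Fin n) ℝ,
        Pᵀ = P ∧ P.PosDefR ∧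
        (fromBlocks
          (fromBlocks
            ((fromBlocks Ap (Bp * Cc) (Bc * Cp) Ac)ᵀ * P +
              P * fromBlocks Ap (Bp * Cc) (Bc * Cp) Ac)
            (P * fromRows Bw (0 : Matrix (Fin n) (Fin m) ℝ))
            ((fromRows Bw (0 : Matrix (Fin n) (Fin m) ℝ))ᵀ * P)
            (-(γ • (1 : Matrix (Fin m) (Fin m) ℝ))))
          (fromRows (fromCols Cz (0 : Matrix (Fin r) (Fin n) ℝ))ᵀ Dzᵀ)
          (fromCols (fromCols Cz (0 : Matrix (Fin r) (Fin n) ℝ)) Dz)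
          (-(γ • (1 : Matrix (Fin r) (Fin r) ℝ)))).NegDefR) := by
  open OutputFeedback in
  have hN : IsUnit (1 - R * S) := isUnit_one_sub_mul_of_posDefR hLMI₃
  have hP := lyapunovMatrix_isSymm hN hSsymm hRsymm
  have hPpos := lyapunovMatrix_posDefR hN hSsymm hRsymm hLMI₃
  refine ⟨controllerA Ap Bp Cp S R Ahat Bhat Chat, Bhat, controllerC S R Chat, fun lam hlam => ?_,
    lyapunovMatrix S R, hP, hPpos, hinfMatrix_closedLoop_negDefR hN hSsymm hRsymm hLMI₁⟩
  have hθ : 0 < Real.sin θ := Real.sin_pos_of_pos_of_lt_pi hθ₁ (by linarith [Real.pi_pos])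
  exact re_neg_and_abs_im_lt_of_sectorMatrix hθ hP hPpos
    (sectorMatrix_closedLoop_negDefR hN hSsymm hRsymm hLMI₂) hlam

/-- Theorem 1 of the paper. If the three synthesis LMIs (i)–(iii) are
feasible in the symmetric variables `S`, `R` and the matrices `Â`, `B̂`, `Ĉ`, then there
exists an output-feedback controller `(A_c, B_c, C_c)` such that (a) every eigenvalue of the
closed-loop matrix `A = [[A_p, B_p C_c],[B_c C_p, A_c]]` lies in the open conic sector with
apex at the origin and inner half-angle `θ` about the negative real axis, and (b) there is a
symmetric positive definite `P` making the H∞ analysis LMI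
`[[AᵀP + PA, PB, Cᵀ],[BᵀP, −γI, Dᵀ],[C, D, −γI]]` negative definite (i.e. `‖T_zw‖∞ ≤ γ`). -/
theorem stmt_0 (n m p q r : ℕ) (γ θ : ℝ) (hγ : 0 < γ)
    (hθ₁ : 0 < θ) (hθ₂ : θ < Real.pi / 2)
    (Ap : Matrix (Fin n) (Fin n) ℝ) (Bw : Matrix (Fin n) (Fin m) ℝ)
    (Bp : Matrix (Fin n) (Fin p) ℝ) (Cp : Matrix (Fin q) (Fin n) ℝ)
    (Cz : Matrix (Fin r) (Fin n) ℝ) (Dz : Matrix (Fin r) (Fin m) ℝ)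
    (S R Ahat : Matrix (Fin n) (Fin n) ℝ) (Bhat : Matrix (Fin n) (Fin q) ℝ)
    (Chat : Matrix (Fin p) (Fin n) ℝ)
    (hSsymm : Sᵀ = S) (hRsymm : Rᵀ = R)
    -- (i) the H∞ synthesis LMI, with Φ₁ = A_p S + S A_pᵀ + B_p Ĉ + Ĉᵀ B_pᵀ and
    --     Φ₂ = A_pᵀ R + R A_p + B̂ C_p + C_pᵀ B̂ᵀ
    (hLMI₁ : (fromBlocks
        (fromBlocks
          (fromBlocks
            (Ap * S + S * Apᵀ + Bp * Chat + Chatᵀ * Bpᵀ)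
            (Ahatᵀ + Ap)
            (Ahat + Apᵀ)
            (Apᵀ * R + R * Ap + Bhat * Cp + Cpᵀ * Bhatᵀ))
          (fromRows Bw (R * Bw))
          (fromCols Bwᵀ (Bwᵀ * Rᵀ))
          (-(γ • (1 : Matrix (Fin m) (Fin m) ℝ))))
        (fromRows (fromRows (S * Czᵀ) Czᵀ) Dzᵀ)
        (fromCols (fromCols (Cz * S) Cz) Dz)
        (-(γ • (1 : Matrix (Fin r) (Fin r) ℝ)))).NegDefR)
    -- (ii) the conic-sector pole-placement LMI, with
    --     Φ₃ = [[A_p S + B_p Ĉ, A_p],[Â, R A_p + B̂ C_p]]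
    (hLMI₂ : (fromBlocks
        (Real.sin θ •
          (fromBlocks (Ap * S + Bp * Chat) Ap Ahat (R * Ap + Bhat * Cp) +
            (fromBlocks (Ap * S + Bp * Chat) Ap Ahat (R * Ap + Bhat * Cp))ᵀ))
        (Real.cos θ •
          (fromBlocks (Ap * S + Bp * Chat) Ap Ahat (R * Ap + Bhat * Cp) -
            (fromBlocks (Ap * S + Bp * Chat) Ap Ahat (R * Ap + Bhat * Cp))ᵀ))
        (Real.cos θ •
          ((fromBlocks (Ap * S + Bp * Chat) Ap Ahat (R * Ap + Bhat * Cp))ᵀ -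
            fromBlocks (Ap * S + Bp * Chat) Ap Ahat (R * Ap + Bhat * Cp)))
        (Real.sin θ •
          ((fromBlocks (Ap * S + Bp * Chat) Ap Ahat (R * Ap + Bhat * Cp))ᵀ +
            fromBlocks (Ap * S + Bp * Chat) Ap Ahat (R * Ap + Bhat * Cp)))).NegDefR)
    -- (iii) the coupling LMI
    (hLMI₃ : (fromBlocks S (1 : Matrix (Fin n) (Fin n) ℝ) 1 R).PosDefR) :
    ∃ (Ac : Matrix (Fin n) (Fin n) ℝ) (Bc : Matrix (Fin n) (Fin q) ℝ)
      (Cc : Matrix (Fin p) (Fin n) ℝ),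
      -- (a) regional pole placement of the closed-loop eigenvalues
      (∀ lam : ℂ,
        (lam • (1 : Matrix (Fin n ⊕ Fin n) (Fin n ⊕ Fin n) ℂ) -
            (fromBlocks Ap (Bp * Cc) (Bc * Cp) Ac).map Complex.ofReal).det = 0 →
        lam.re < 0 ∧ Real.cos θ * |lam.im| < Real.sin θ * |lam.re|) ∧
      -- (b) the LMI characterization of the closed-loop H∞ norm bound ‖T_zw‖∞ ≤ γ
      (∃ P : Matrix (Fin n ⊕ Fin n) (Fin n ⊕ Fin n) ℝ,
        Pᵀ = P ∧ P.PosDefR ∧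
        (fromBlocks
          (fromBlocks
            ((fromBlocks Ap (Bp * Cc) (Bc * Cp) Ac)ᵀ * P +
              P * fromBlocks Ap (Bp * Cc) (Bc * Cp) Ac)
            (P * fromRows Bw (0 : Matrix (Fin n) (Fin m) ℝ))
            ((fromRows Bw (0 : Matrix (Fin n) (Fin m) ℝ))ᵀ * P)
            (-(γ • (1 : Matrix (Fin m) (Fin m) ℝ))))
          (fromRows (fromCols Cz (0 : Matrix (Fin r) (Fin n) ℝ))ᵀ Dzᵀ)
          (fromCols (fromCols Cz (0 : Matrix (Fin r) (Fin n) ℝ)) Dz)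
          (-(γ • (1 : Matrix (Fin r) (Fin r) ℝ)))).NegDefR) :=
  stmt_0_general n m p q r γ θ hθ₁ hθ₂ Ap Bw Bp Cp Cz Dz S R Ahat Bhat Chat hSsymm hRsymm hLMI₁
    hLMI₂ hLMI₃
end

section
/- Let γ > 0 and let A_p ∈ ℝ^{n×n}, B_w ∈ ℝ^{n×m}, B_p ∈ ℝ^{n×p}, C_p ∈ ℝ^{q×n}, C_z ∈ ℝ^{r×n}, D_z ∈ ℝ^{r×m}, and controller matrices A_c, B_c, C_c be given. Let S, V, W, R, U, Z be n×n real matrices such that P = [[S, V],[Vᵀ, W]] is symmetric and invertible with inverse P⁻¹ = [[R, U],[Uᵀ, Z]]. Define Â = S A_p R + S B_p C_c Uᵀ + V B_c C_p R + V A_c Uᵀ, B̂ = V B_c, Ĉ = C_c Uᵀ, and let A, B, C, D be the closed-loop block matrices. Then, with X = diag(Π₁, I_m, I_r) where Π₁ = [[R, I],[Uᵀ, 0]], one has the congruence identity Xᵀ · [[AᵀP + PA, PB, Cᵀ],[BᵀP, −γI, Dᵀ],[C, D, −γI]] · X = [[Φ₁ + Φ₁ᵀ, A_p + Âᵀ,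 B_w, R C_zᵀ],[A_pᵀ + Â, Φ₂ + Φ₂ᵀ, S B_w, C_zᵀ],[B_wᵀ, B_wᵀ Sᵀ, −γI, D_zᵀ],[C_z R, C_z, D_z, −γI]], where Φ₁ = A_p R + B_p Ĉ and Φ₂ = S A_p + B̂ C_p. -/
/-!
The congruence factor `Π₁` consists of the first block column of `P⁻¹` next to `[I; 0]`, so
`P Π₁ = [[I, S], [0, Vᵀ]]` can be read off from `P P⁻¹ = I`. As `P` is symmetric,
`Π₁ᵀ (AᵀP + PA) Π₁ = N + Nᵀ` with `N = (P Π₁)ᵀ A Π₁`, and `Π₁ᵀ P B = (P Π₁)ᵀ B`, both computed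
blockwise. In the output column, `Π₁ᵀ Cᵀ = [Rᵀ C_zᵀ; C_zᵀ]` with `Rᵀ = R` by symmetry of `P⁻¹`.
-/

open Matrix

namespace Matrix

variable {α l m n : Type*} [Fintype m] [Fintype n] [DecidableEq n]

theorem transpose_fromBlocks_one_mul_fromBlocks_mul_fromBlocks_one [Semiring α]
    (T : Matrix m m α) (M₁₁ : Matrix m m α) (M₁₂ : Matrix m n α) (M₂₁ : Matrix n m α)
    (M₂₂ : Matrix n n α) :
    (fromBlocks T 0 0 (1 : Matrix n n α))ᵀ * fromBlocks M₁₁ M₁₂ M₂₁ M₂₂ *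
        fromBlocks T 0 0 1 =
      fromBlocks (Tᵀ * M₁₁ * T) (Tᵀ * M₁₂) (M₂₁ * T) M₂₂ := by
  rw [fromBlocks_transpose, fromBlocks_multiply, fromBlocks_multiply]
  simp

theorem transpose_fromBlocks_one_mul_fromRows [Semiring α] (T : Matrix m m α)
    (M₁ : Matrix m l α) (M₂ : Matrix n l α) :
    (fromBlocks T 0 0 (1 : Matrix n n α))ᵀ * fromRows M₁ M₂ = fromRows (Tᵀ * M₁) M₂ := by
  simp [fromBlocks_transpose, fromBlocks_mul_fromRows]

theorem fromCols_mul_fromBlocks_one [Semiring α] (T : Matrix m m α)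
    (M₁ : Matrix l m α) (M₂ : Matrix l n α) :
    fromCols M₁ M₂ * fromBlocks T 0 0 (1 : Matrix n n α) = fromCols (M₁ * T) M₂ := by
  simp [fromCols_mul_fromBlocks]

theorem transpose_fromBlocks_one_mul_lyapunov_mul [CommRing α] {P : Matrix m m α}
    (hP : P.IsSymm) (T A : Matrix m m α) (B : Matrix m n α) (M : Matrix n n α) :
    (fromBlocks T 0 0 (1 : Matrix n n α))ᵀ * fromBlocks (Aᵀ * P + P * A) (P * B) (Bᵀ * P) M *
        fromBlocks T 0 0 1 =
      fromBlocks ((P * T)ᵀ * A * T + ((P * T)ᵀ * A * T)ᵀ) ((P * T)ᵀ * B) ((P * T)ᵀ * B)ᵀ M := by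
  rw [transpose_fromBlocks_one_mul_fromBlocks_mul_fromBlocks_one]
  simp only [transpose_mul, transpose_transpose, hP.eq, Matrix.mul_add, Matrix.add_mul,
    Matrix.mul_assoc, add_comm]

theorem IsSymm.of_mul_eq_one [CommRing α] [DecidableEq m] {P Q : Matrix m m α} (hP : P.IsSymm)
    (h : P * Q = 1) : Q.IsSymm :=
  inv_eq_right_inv h ▸ hP.inv

theorem fromBlocks_mul_fromBlocks_one_zero_of_mul_eq_one [Semiring α] [DecidableEq m]
    {P₁₁ : Matrix m m α} {P₁₂ : Matrix m n α} {P₂₁ : Matrix n m α} {P₂₂ : Matrix n n α}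
    {Q₁₁ : Matrix m m α} {Q₁₂ : Matrix m n α} {Q₂₁ : Matrix n m α} {Q₂₂ : Matrix n n α}
    (h : fromBlocks P₁₁ P₁₂ P₂₁ P₂₂ * fromBlocks Q₁₁ Q₁₂ Q₂₁ Q₂₂ = 1) :
    fromBlocks P₁₁ P₁₂ P₂₁ P₂₂ * fromBlocks Q₁₁ 1 Q₂₁ 0 = fromBlocks 1 P₁₁ 0 P₂₁ := by
  rw [fromBlocks_multiply, ← fromBlocks_one, fromBlocks_inj] at h
  rw [fromBlocks_multiply, h.1, h.2.2.1]
  simp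

theorem fromBlocks_one_zero_mul_mul_fromBlocks_one_zero [CommRing α] [DecidableEq m]
    (S V R U A₁₁ A₁₂ A₂₁ A₂₂ : Matrix m m α) :
    fromBlocks 1 0 S V * fromBlocks A₁₁ A₁₂ A₂₁ A₂₂ * fromBlocks R 1 U 0 =
      fromBlocks (A₁₁ * R + A₁₂ * U) A₁₁
        (S * A₁₁ * R + S * A₁₂ * U + V * A₂₁ * R + V * A₂₂ * U) (S * A₁₁ + V * A₂₁) := by
  simp only [fromBlocks_multiply, Matrix.one_mul, Matrix.zero_mul, add_zero, Matrix.mul_one,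
    Matrix.mul_zero, Matrix.add_mul, Matrix.mul_assoc]
  congr 1; abel

end Matrix

theorem stmt_4_general (n m p q r : ℕ) (γ : ℝ)
    (Ap : Matrix (Fin n) (Fin n) ℝ) (Bw : Matrix (Fin n) (Fin m) ℝ)
    (Bp : Matrix (Fin n) (Fin p) ℝ) (Cp : Matrix (Fin q) (Fin n) ℝ)
    (Cz : Matrix (Fin r) (Fin n) ℝ) (Dz : Matrix (Fin r) (Fin m) ℝ)
    (Ac : Matrix (Fin n) (Fin n) ℝ) (Bc : Matrix (Fin n) (Fin q) ℝ)
    (Cc : Matrix (Fin p) (Fin n) ℝ)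
    (S V W R U Z : Matrix (Fin n) (Fin n) ℝ)
    (hPsymm : (fromBlocks S V Vᵀ W)ᵀ = fromBlocks S V Vᵀ W)
    (hPinv₁ : fromBlocks S V Vᵀ W * fromBlocks R U Uᵀ Z = 1) :
    -- abbreviations for the closed-loop matrices and the congruence transformation
    ∀ (A : Matrix (Fin n ⊕ Fin n) (Fin n ⊕ Fin n) ℝ)
      (B : Matrix (Fin n ⊕ Fin n) (Fin m) ℝ)
      (C : Matrix (Fin r) (Fin n ⊕ Fin n) ℝ)
      (D : Matrix (Fin r) (Fin m) ℝ)
      (P : Matrix (Fin n ⊕ Fin n) (Fin n ⊕ Fin n) ℝ)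
      (X : Matrix (((Fin n ⊕ Fin n) ⊕ Fin m) ⊕ Fin r) (((Fin n ⊕ Fin n) ⊕ Fin m) ⊕ Fin r) ℝ)
      (Ahat : Matrix (Fin n) (Fin n) ℝ) (Bhat : Matrix (Fin n) (Fin q) ℝ)
      (Chat : Matrix (Fin p) (Fin n) ℝ),
      A = fromBlocks Ap (Bp * Cc) (Bc * Cp) Ac →
      B = fromRows Bw (0 : Matrix (Fin n) (Fin m) ℝ) →
      C = fromCols Cz (0 : Matrix (Fin r) (Fin n) ℝ) →
      D = Dz →
      P = fromBlocks S V Vᵀ W →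
      X = fromBlocks
            (fromBlocks (fromBlocks R (1 : Matrix (Fin n) (Fin n) ℝ) Uᵀ 0) 0 0
              (1 : Matrix (Fin m) (Fin m) ℝ))
            0 0 (1 : Matrix (Fin r) (Fin r) ℝ) →
      Ahat = S * Ap * R + S * Bp * Cc * Uᵀ + V * Bc * Cp * R + V * Ac * Uᵀ →
      Bhat = V * Bc →
      Chat = Cc * Uᵀ →
      Xᵀ *
          fromBlocks
            (fromBlocks (Aᵀ * P + P * A) (P * B) (Bᵀ * P)
              (-(γ • (1 : Matrix (Fin m) (Fin m) ℝ))))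
            (fromRows Cᵀ Dᵀ)
            (fromCols C D)
            (-(γ • (1 : Matrix (Fin r) (Fin r) ℝ))) * X =
        fromBlocks
          (fromBlocks
            (fromBlocks
              ((Ap * R + Bp * Chat) + (Ap * R + Bp * Chat)ᵀ)
              (Ap + Ahatᵀ)
              (Apᵀ + Ahat)
              ((S * Ap + Bhat * Cp) + (S * Ap + Bhat * Cp)ᵀ))
            (fromRows Bw (S * Bw))
            (fromCols Bwᵀ (Bwᵀ * Sᵀ))
            (-(γ • (1 : Matrix (Fin m) (Fin m) ℝ))))
          (fromRows (fromRows (R * Czᵀ) Czᵀ) Dzᵀ)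
          (fromCols (fromCols (Cz * R) Cz) Dz)
          (-(γ • (1 : Matrix (Fin r) (Fin r) ℝ))) := by
  intro A B C D P X Ahat Bhat Chat hA hB hC hD hP hX hAhat hBhat hChat
  subst hA hB hC hD hP hX hAhat hBhat hChat
  have hPT := fromBlocks_mul_fromBlocks_one_zero_of_mul_eq_one hPinv₁
  have hS : Sᵀ = S := (isSymm_fromBlocks_iff.mp hPsymm).1
  have hR : Rᵀ = R := (isSymm_fromBlocks_iff.mp (IsSymm.of_mul_eq_one hPsymm hPinv₁)).1
  rw [transpose_fromBlocks_one_mul_fromBlocks_mul_fromBlocks_one,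
    transpose_fromBlocks_one_mul_lyapunov_mul hPsymm, hPT,
    transpose_fromBlocks_one_mul_fromRows, fromCols_mul_fromBlocks_one, fromBlocks_transpose,
    transpose_one, transpose_zero, fromBlocks_one_zero_mul_mul_fromBlocks_one_zero, hS]
  simp [fromBlocks_transpose, fromBlocks_add, fromBlocks_mul_fromRows, fromCols_mul_fromBlocks,
    transpose_fromCols, transpose_fromRows, Matrix.mul_assoc, add_comm, hR, hS]

/-- Congruence of the H∞ analysis LMI matrix by
`X = diag(Π₁, I_m, I_r)`, `Π₁ = [[R, I],[Uᵀ, 0]]`: with `P = [[S, V],[Vᵀ, W]]` symmetric and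
invertible with inverse `[[R, U],[Uᵀ, Z]]`, and transformed controller variables
`Â = S A_p R + S B_p C_c Uᵀ + V B_c C_p R + V A_c Uᵀ`, `B̂ = V B_c`, `Ĉ = C_c Uᵀ`, one has
`Xᵀ [[AᵀP + PA, PB, Cᵀ],[BᵀP, −γI, Dᵀ],[C, D, −γI]] X =
 [[Φ₁ + Φ₁ᵀ, A_p + Âᵀ, B_w, R C_zᵀ],[A_pᵀ + Â, Φ₂ + Φ₂ᵀ, S B_w, C_zᵀ],
  [B_wᵀ, B_wᵀ Sᵀ, −γI, D_zᵀ],[C_z R, C_z, D_z, −γI]]`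
with `Φ₁ = A_p R + B_p Ĉ`, `Φ₂ = S A_p + B̂ C_p`. -/
theorem stmt_4 (n m p q r : ℕ) (γ : ℝ) (hγ : 0 < γ)
    (Ap : Matrix (Fin n) (Fin n) ℝ) (Bw : Matrix (Fin n) (Fin m) ℝ)
    (Bp : Matrix (Fin n) (Fin p) ℝ) (Cp : Matrix (Fin q) (Fin n) ℝ)
    (Cz : Matrix (Fin r) (Fin n) ℝ) (Dz : Matrix (Fin r) (Fin m) ℝ)
    (Ac : Matrix (Fin n) (Fin n) ℝ) (Bc : Matrix (Fin n) (Fin q) ℝ)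
    (Cc : Matrix (Fin p) (Fin n) ℝ)
    (S V W R U Z : Matrix (Fin n) (Fin n) ℝ)
    (hPsymm : (fromBlocks S V Vᵀ W)ᵀ = fromBlocks S V Vᵀ W)
    (hPinv₁ : fromBlocks S V Vᵀ W * fromBlocks R U Uᵀ Z = 1)
    (hPinv₂ : fromBlocks R U Uᵀ Z * fromBlocks S V Vᵀ W = 1) :
    -- abbreviations for the closed-loop matrices and the congruence transformation
    ∀ (A : Matrix (Fin n ⊕ Fin n) (Fin n ⊕ Fin n) ℝ)
      (B : Matrix (Fin n ⊕ Fin n) (Fin m) ℝ)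
      (C : Matrix (Fin r) (Fin n ⊕ Fin n) ℝ)
      (D : Matrix (Fin r) (Fin m) ℝ)
      (P : Matrix (Fin n ⊕ Fin n) (Fin n ⊕ Fin n) ℝ)
      (X : Matrix (((Fin n ⊕ Fin n) ⊕ Fin m) ⊕ Fin r) (((Fin n ⊕ Fin n) ⊕ Fin m) ⊕ Fin r) ℝ)
      (Ahat : Matrix (Fin n) (Fin n) ℝ) (Bhat : Matrix (Fin n) (Fin q) ℝ)
      (Chat : Matrix (Fin p) (Fin n) ℝ),
      A = fromBlocks Ap (Bp * Cc) (Bc * Cp) Ac →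
      B = fromRows Bw (0 : Matrix (Fin n) (Fin m) ℝ) →
      C = fromCols Cz (0 : Matrix (Fin r) (Fin n) ℝ) →
      D = Dz →
      P = fromBlocks S V Vᵀ W →
      X = fromBlocks
            (fromBlocks (fromBlocks R (1 : Matrix (Fin n) (Fin n) ℝ) Uᵀ 0) 0 0
              (1 : Matrix (Fin m) (Fin m) ℝ))
            0 0 (1 : Matrix (Fin r) (Fin r) ℝ) →
      Ahat = S * Ap * R + S * Bp * Cc * Uᵀ + V * Bc * Cp * R + V * Ac * Uᵀ →
      Bhat = V * Bc →
      Chat = Cc * Uᵀ →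
      Xᵀ *
          fromBlocks
            (fromBlocks (Aᵀ * P + P * A) (P * B) (Bᵀ * P)
              (-(γ • (1 : Matrix (Fin m) (Fin m) ℝ))))
            (fromRows Cᵀ Dᵀ)
            (fromCols C D)
            (-(γ • (1 : Matrix (Fin r) (Fin r) ℝ))) * X =
        fromBlocks
          (fromBlocks
            (fromBlocks
              ((Ap * R + Bp * Chat) + (Ap * R + Bp * Chat)ᵀ)
              (Ap + Ahatᵀ)
              (Apᵀ + Ahat)
              ((S * Ap + Bhat * Cp) + (S * Ap + Bhat * Cp)ᵀ))
            (fromRows Bw (S * Bw))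
            (fromCols Bwᵀ (Bwᵀ * Sᵀ))
            (-(γ • (1 : Matrix (Fin m) (Fin m) ℝ))))
          (fromRows (fromRows (R * Czᵀ) Czᵀ) Dzᵀ)
          (fromCols (fromCols (Cz * R) Cz) Dz)
          (-(γ • (1 : Matrix (Fin r) (Fin r) ℝ))) :=
  stmt_4_general n m p q r γ Ap Bw Bp Cp Cz Dz Ac Bc Cc S V W R U Z hPsymm hPinv₁
end

section
/- Let S and R be symmetric n×n real matrices such that the 2n×2n block matrix [[S, I],[I, R]] is positive definite. Then the matrix I − RS is invertible. -/
open Matrix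

/-- If `S`, `R` are symmetric real `n × n` matrices with
`[[S, I],[I, R]]` positive definite, then `I − RS` is invertible. -/
theorem stmt_6 (n : ℕ) (S R : Matrix (Fin n) (Fin n) ℝ)
    (hS : Sᵀ = S) (hR : Rᵀ = R)
    (hPD : (fromBlocks S (1 : Matrix (Fin n) (Fin n) ℝ) 1 R).PosDefR) :
    IsUnit ((1 : Matrix (Fin n) (Fin n) ℝ) - R * S) := by
  have hdet : ((1 : Matrix (Fin n) (Fin n) ℝ) - R * S).det ≠ 0 := by
    intro hd
    obtain ⟨x, hx0, hx⟩ := (Matrix.exists_mulVec_eq_zero_iff).2 hd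
    have hRS : R *ᵥ (S *ᵥ x) = x := by
      have h := hx
      rw [sub_mulVec, one_mulVec, sub_eq_zero] at h
      rw [mulVec_mulVec, ← h]
    set z : (Fin n ⊕ Fin n) → ℝ := Sum.elim x (-(S *ᵥ x)) with hz
    have hzne : z ≠ 0 := by
      intro h
      apply hx0
      funext i
      simpa [hz] using congrFun h (Sum.inl i)
    have hm : (fromBlocks S 1 1 R) *ᵥ z = 0 := by
      rw [hz]
      have : (Sum.elim x (-(S *ᵥ x)) : (Fin n ⊕ Fin n) → ℝ) =
          Sum.elim x (-(S *ᵥ x)) := rfl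
      rw [show (Sum.elim x (-(S *ᵥ x)) : (Fin n ⊕ Fin n) → ℝ) =
          Sum.elim x (-(S *ᵥ x)) from rfl]
      funext i
      cases i with
      | inl i =>
        simp [fromBlocks_mulVec, mulVec_neg, hRS]
      | inr i =>
        simp [fromBlocks_mulVec, mulVec_neg, hRS]
    have hpos := hPD z hzne
    rw [hm] at hpos
    simp at hpos
  exact (isUnit_iff_isUnit_det _).2 (isUnit_iff_ne_zero.2 hdet)
end

section
/- Let S and R be symmetric n×n real matrices with [[S, I],[I, R]] positive definite, and let U, V be invertible n×n real matrices satisfying R S + U Vᵀ = I. Set Π₁ = [[R, I],[Uᵀ, 0]] and Π₂ = [[I, S],[0, Vᵀ]]. Then Π₁ is invertible, and the matrix P := Π₂ Π₁⁻¹ is symmetric and positive definite. -/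
open Matrix

/-- Let `S`, `R` be symmetric with `[[S, I],[I, R]]` positive definite and
let `U`, `V` be invertible with `R S + U Vᵀ = I`. Then `Π₁ = [[R, I],[Uᵀ, 0]]` is invertible
and `P = Π₂ Π₁⁻¹` (with `Π₂ = [[I, S],[0, Vᵀ]]`) is symmetric positive definite. -/
theorem stmt_7 (n : ℕ) (S R U V : Matrix (Fin n) (Fin n) ℝ)
    (hS : Sᵀ = S) (hR : Rᵀ = R)
    (hPD : (fromBlocks S (1 : Matrix (Fin n) (Fin n) ℝ) 1 R).PosDefR)
    (hU : IsUnit U) (hV : IsUnit V)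
    (hUV : R * S + U * Vᵀ = 1) :
    IsUnit (fromBlocks R (1 : Matrix (Fin n) (Fin n) ℝ) Uᵀ 0) ∧
    (fromBlocks (1 : Matrix (Fin n) (Fin n) ℝ) S 0 Vᵀ *
        (fromBlocks R (1 : Matrix (Fin n) (Fin n) ℝ) Uᵀ 0)⁻¹)ᵀ =
      fromBlocks (1 : Matrix (Fin n) (Fin n) ℝ) S 0 Vᵀ *
        (fromBlocks R (1 : Matrix (Fin n) (Fin n) ℝ) Uᵀ 0)⁻¹ ∧
    (fromBlocks (1 : Matrix (Fin n) (Fin n) ℝ) S 0 Vᵀ *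
        (fromBlocks R (1 : Matrix (Fin n) (Fin n) ℝ) Uᵀ 0)⁻¹).PosDefR := by

  have hUt : IsUnit (Uᵀ).det := by
    rw [Matrix.det_transpose, ← Matrix.isUnit_iff_isUnit_det]; exact hU
  set P1 := fromBlocks R (1 : Matrix (Fin n) (Fin n) ℝ) Uᵀ 0 with hP1
  set P2 := fromBlocks (1 : Matrix (Fin n) (Fin n) ℝ) S 0 Vᵀ with hP2
  set B := fromBlocks (0 : Matrix (Fin n) (Fin n) ℝ) (Uᵀ)⁻¹ 1 (-(R * (Uᵀ)⁻¹)) with hB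
  have hP1B : P1 * B = 1 := by
    rw [hP1, hB, fromBlocks_multiply]
    rw [show Uᵀ * (Uᵀ)⁻¹ = 1 from Matrix.mul_nonsing_inv _ hUt]
    simp [← Matrix.fromBlocks_one]
  have hBP1 : B * P1 = 1 := by
    rw [hP1, hB, fromBlocks_multiply]
    rw [show (Uᵀ)⁻¹ * Uᵀ = 1 from Matrix.nonsing_inv_mul _ hUt,
      show (1 : Matrix (Fin n) (Fin n) ℝ) * R + -(R * (Uᵀ)⁻¹) * Uᵀ = 0 by
        rw [Matrix.neg_mul, Matrix.nonsing_inv_mul_cancel_right _ _ hUt, Matrix.one_mul,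
          add_neg_cancel]]
    simp [← Matrix.fromBlocks_one]
  have hUnit : IsUnit P1 := ⟨⟨P1, B, hP1B, hBP1⟩, rfl⟩
  have hinv : P1⁻¹ = B := Matrix.inv_eq_right_inv hP1B
  have hQ : P1ᵀ * P2 = fromBlocks R (1 : Matrix (Fin n) (Fin n) ℝ) 1 S := by
    rw [hP1, hP2, fromBlocks_transpose, fromBlocks_multiply]
    simp [hR, hUV]
  have hPfact : P2 * P1⁻¹ = Bᵀ * (fromBlocks R (1 : Matrix (Fin n) (Fin n) ℝ) 1 S) * B := by
    rw [hinv, ← hQ, ← mul_assoc Bᵀ, ← transpose_mul, hP1B, transpose_one, one_mul]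
  set Q := fromBlocks R (1 : Matrix (Fin n) (Fin n) ℝ) 1 S with hQdef
  have hQsym : Qᵀ = Q := by
    rw [hQdef, fromBlocks_transpose, hR, hS, transpose_one]
  refine ⟨hUnit, ?_, ?_⟩
  · rw [hPfact, transpose_mul, transpose_mul, transpose_transpose, hQsym, mul_assoc]
  · intro x hx
    rw [hPfact]
    set y := B *ᵥ x with hy
    have hy0 : y ≠ 0 := by
      intro h0
      apply hx
      have : P1 *ᵥ y = x := by
        rw [hy, Matrix.mulVec_mulVec, hP1B, Matrix.one_mulVec]
      rw [← this, h0, Matrix.mulVec_zero]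
    have hform : x ⬝ᵥ (Bᵀ * Q * B) *ᵥ x = y ⬝ᵥ Q *ᵥ y := by
      rw [← Matrix.mulVec_mulVec, ← Matrix.mulVec_mulVec, Matrix.dotProduct_mulVec x Bᵀ,
        Matrix.vecMul_transpose, hy]
    rw [hform]
    have hswap : (fromBlocks S (1 : Matrix (Fin n) (Fin n) ℝ) 1 R).submatrix
        (Equiv.sumComm (Fin n) (Fin n)) (Equiv.sumComm (Fin n) (Fin n)) = Q := by
      rw [hQdef]
      exact fromBlocks_submatrix_sum_swap_sum_swap S 1 1 R
    rw [← hswap, Matrix.submatrix_mulVec_equiv]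
    have hdot : y ⬝ᵥ ((fromBlocks S (1 : Matrix (Fin n) (Fin n) ℝ) 1 R *ᵥ
        (y ∘ ⇑(Equiv.sumComm (Fin n) (Fin n)).symm)) ∘ ⇑(Equiv.sumComm (Fin n) (Fin n))) =
        (y ∘ ⇑(Equiv.sumComm (Fin n) (Fin n)).symm) ⬝ᵥ
          (fromBlocks S (1 : Matrix (Fin n) (Fin n) ℝ) 1 R *ᵥ
            (y ∘ ⇑(Equiv.sumComm (Fin n) (Fin n)).symm)) := by
      unfold dotProduct
      rw [← Equiv.sum_comp (Equiv.sumComm (Fin n) (Fin n))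
        (fun i => (y ∘ ⇑(Equiv.sumComm (Fin n) (Fin n)).symm) i *
          (fromBlocks S (1 : Matrix (Fin n) (Fin n) ℝ) 1 R *ᵥ
            (y ∘ ⇑(Equiv.sumComm (Fin n) (Fin n)).symm)) i)]
      simp
    rw [hdot]
    apply hPD
    intro h0
    apply hy0
    funext i
    have := congrFun h0 ((Equiv.sumComm (Fin n) (Fin n)) i)
    simpa using this
end

section
/- Let θ ∈ (0, π/2), let A be an n×n real matrix, and let P be a symmetric positive definite n×n real matrix such that the 2n×2n block matrix N_θ(A, P) = [[sin θ·(AP + PAᵀ), cos θ·(AP − PAᵀ)],[cos θ·(PAᵀ − AP), sin θ·(AP + PAᵀ)]] is negative definite. Then every complex eigenvalue λ of A (i.e., every λ ∈ ℂ with det(λI − A) = 0, A regarded as a complex matrix) satisfies Re λ < 0 and cos θ·|Im λ| < sin θ·|Re λ|; that is, λ lies in the open conic sector in the left half-plane with apex at the origin and inner angle 2θ. -/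
open Matrix

/-! If `x + i y` is a left eigenvector of `A` for `λ = a + i b`, the quadratic form of
`N_θ(A, P)` at `(x, y)` equals `2 (a sin θ - b cos θ) (xᵀ P x + yᵀ P y)`, so negative
definiteness of `N_θ(A, P)` and positive definiteness of `P` give `a sin θ < b cos θ`.
Since `A` is real, `λ̄` is an eigenvalue too, whence `a sin θ < -|b| cos θ`: this is the
sector condition. -/

namespace Matrix

variable {ι : Type*} [Fintype ι]

def conicSectorLMI (s c : ℝ) (A P : Matrix ι ι ℝ) : Matrix (ι ⊕ ι) (ι ⊕ ι) ℝ :=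
  fromBlocks (s • (A * P + P * Aᵀ)) (c • (A * P - P * Aᵀ))
    (c • (P * Aᵀ - A * P)) (s • (A * P + P * Aᵀ))

lemma PosDefR.dotProduct_mulVec_nonneg {P : Matrix ι ι ℝ} (hP : P.PosDefR) (x : ι → ℝ) :
    0 ≤ x ⬝ᵥ P *ᵥ x := by
  rcases eq_or_ne x 0 with rfl | hx
  · simp
  · exact (hP x hx).le

lemma PosDefR.add_pos_of_ne_zero_or_ne_zero {P : Matrix ι ι ℝ} (hP : P.PosDefR) {x y : ι → ℝ}
    (hxy : x ≠ 0 ∨ y ≠ 0) : 0 < x ⬝ᵥ P *ᵥ x + y ⬝ᵥ P *ᵥ y := by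
  rcases hxy with hx | hy
  · exact add_pos_of_pos_of_nonneg (hP x hx) (hP.dotProduct_mulVec_nonneg y)
  · exact add_pos_of_nonneg_of_pos (hP.dotProduct_mulVec_nonneg x) (hP y hy)

lemma conicSectorLMI_quadForm (s c a b : ℝ) {A P : Matrix ι ι ℝ} (hP : Pᵀ = P)
    {x y : ι → ℝ} (hx : x ᵥ* A = a • x - b • y) (hy : y ᵥ* A = b • x + a • y) :
    Sum.elim x y ⬝ᵥ conicSectorLMI s c A P *ᵥ Sum.elim x y =
      2 * (s * a - c * b) * (x ⬝ᵥ P *ᵥ x + y ⬝ᵥ P *ᵥ y) := by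
  have hPsymm (u v : ι → ℝ) : u ⬝ᵥ P *ᵥ v = v ⬝ᵥ P *ᵥ u := by
    rw [dotProduct_mulVec, ← mulVec_transpose, hP, dotProduct_comm]
  have hAP (u v : ι → ℝ) : u ⬝ᵥ (A * P) *ᵥ v = (u ᵥ* A) ⬝ᵥ P *ᵥ v := by
    rw [← mulVec_mulVec, dotProduct_mulVec]
  have hPA (u v : ι → ℝ) : u ⬝ᵥ (P * Aᵀ) *ᵥ v = (v ᵥ* A) ⬝ᵥ P *ᵥ u := by
    rw [← mulVec_mulVec, mulVec_transpose, hPsymm]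
  simp only [conicSectorLMI, fromBlocks_mulVec, Sum.elim_comp_inl, Sum.elim_comp_inr,
    sumElim_dotProduct_sumElim, smul_mulVec, add_mulVec, sub_mulVec, dotProduct_add,
    dotProduct_sub, dotProduct_smul, hAP, hPA, hx, hy, add_dotProduct, sub_dotProduct,
    smul_dotProduct, smul_eq_mul]
  rw [hPsymm y x]
  ring

variable [DecidableEq ι]

lemma exists_re_im_vecMul_of_det_eq_zero {A : Matrix ι ι ℝ} {lam : ℂ}
    (h : (lam • (1 : Matrix ι ι ℂ) - A.map Complex.ofReal).det = 0) :
    ∃ x y : ι → ℝ, (x ≠ 0 ∨ y ≠ 0) ∧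
      x ᵥ* A = lam.re • x - lam.im • y ∧ y ᵥ* A = lam.im • x + lam.re • y := by
  obtain ⟨w, hw, hker⟩ := exists_vecMul_eq_zero_iff.mpr h
  have heig : w ᵥ* A.map Complex.ofReal = lam • w := by
    rwa [vecMul_sub, sub_eq_zero, vecMul_smul, vecMul_one, eq_comm] at hker
  refine ⟨fun i ↦ (w i).re, fun i ↦ (w i).im, ?_, ?_, ?_⟩
  · by_contra! h0
    exact hw (funext fun i ↦ Complex.ext (congrFun h0.1 i) (congrFun h0.2 i))
  · funext j
    simpa [vecMul, dotProduct, Complex.re_sum] using congrArg Complex.re (congrFun heig j)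
  · funext j
    simpa [vecMul, dotProduct, Complex.im_sum, add_comm] using
      congrArg Complex.im (congrFun heig j)

lemma det_conj_smul_one_sub_map_ofReal (A : Matrix ι ι ℝ) (lam : ℂ) :
    ((starRingEnd ℂ) lam • (1 : Matrix ι ι ℂ) - A.map Complex.ofReal).det =
      (starRingEnd ℂ) (lam • (1 : Matrix ι ι ℂ) - A.map Complex.ofReal).det := by
  rw [RingHom.map_det]
  congr 1
  ext i j
  by_cases hij : i = j <;> simp [hij]

lemma mul_re_lt_mul_im_of_det_eq_zero {s c : ℝ} {A P : Matrix ι ι ℝ} (hPsymm : Pᵀ = P)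
    (hPpd : P.PosDefR) (hN : (conicSectorLMI s c A P).NegDefR) {lam : ℂ}
    (hlam : (lam • (1 : Matrix ι ι ℂ) - A.map Complex.ofReal).det = 0) :
    s * lam.re < c * lam.im := by
  obtain ⟨x, y, hxy, hx, hy⟩ := exists_re_im_vecMul_of_det_eq_zero hlam
  have hxy' : Sum.elim x y ≠ 0 := by
    contrapose! hxy
    exact ⟨funext fun i ↦ congrFun hxy (.inl i), funext fun i ↦ congrFun hxy (.inr i)⟩
  have hq := hN _ hxy'
  rw [conicSectorLMI_quadForm s c _ _ hPsymm hx hy] at hq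
  have hp := hPpd.add_pos_of_ne_zero_or_ne_zero hxy
  nlinarith

end Matrix
/-- If `P` is symmetric positive definite and the conic-sector LMI matrix
`N_θ(A, P) = [[sin θ·(AP + PAᵀ), cos θ·(AP − PAᵀ)],[cos θ·(PAᵀ − AP), sin θ·(AP + PAᵀ)]]`
is negative definite, then every complex eigenvalue `λ` of `A` satisfies `Re λ < 0` and
`cos θ·|Im λ| < sin θ·|Re λ|`. -/
theorem stmt_8 (n : ℕ) (θ : ℝ) (hθ₁ : 0 < θ) (hθ₂ : θ < Real.pi / 2)
    (A P : Matrix (Fin n) (Fin n) ℝ)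
    (hPsymm : Pᵀ = P) (hPpd : P.PosDefR)
    (hN : (fromBlocks
        (Real.sin θ • (A * P + P * Aᵀ)) (Real.cos θ • (A * P - P * Aᵀ))
        (Real.cos θ • (P * Aᵀ - A * P)) (Real.sin θ • (A * P + P * Aᵀ))).NegDefR) :
    ∀ lam : ℂ,
      (lam • (1 : Matrix (Fin n) (Fin n) ℂ) - A.map Complex.ofReal).det = 0 →
      lam.re < 0 ∧ Real.cos θ * |lam.im| < Real.sin θ * |lam.re| := by
  intro lam hlam
  have hs : 0 < Real.sin θ := Real.sin_pos_of_pos_of_lt_pi hθ₁ (by linarith [Real.pi_pos])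
  have hc : 0 < Real.cos θ := Real.cos_pos_of_mem_Ioo ⟨by linarith [Real.pi_pos], hθ₂⟩
  have hconj : ((starRingEnd ℂ) lam • (1 : Matrix (Fin n) (Fin n) ℂ) -
      A.map Complex.ofReal).det = 0 := by
    rw [det_conj_smul_one_sub_map_ofReal, hlam, map_zero]
  have h₁ := mul_re_lt_mul_im_of_det_eq_zero hPsymm hPpd hN hlam
  have h₂ := mul_re_lt_mul_im_of_det_eq_zero hPsymm hPpd hN hconj
  rw [Complex.conj_re, Complex.conj_im] at h₂
  have hbound : Real.cos θ * |lam.im| < -(Real.sin θ * lam.re) := by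
    rcases abs_cases lam.im with ⟨h, _⟩ | ⟨h, _⟩ <;> rw [h] <;> linarith
  have hre : lam.re < 0 := by
    by_contra! h
    nlinarith [abs_nonneg lam.im]
  refine ⟨hre, ?_⟩
  rwa [abs_of_neg hre, mul_neg]
end

section
/- Let θ ∈ (0, π/2) and v ∈ ℂ, and let v̄ denote the complex conjugate of v. The 2×2 complex matrix f_D(v) = [[sin θ·(v + v̄), cos θ·(v − v̄)],[cos θ·(v̄ − v), sin θ·(v + v̄)]] is Hermitian, and f_D(v) is negative definite if and only if Re v < 0 and cos θ·|Im v| < sin θ·|Re v|, i.e., if and only if v lies in the open conic sector D_θ with apex at the origin and inner angle 2θ. -/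
open Matrix
open scoped ComplexOrder

/-- The characteristic function of the conic LMI region with apex at the origin and
inner angle `2θ`:
`f_D(v) = [[sin θ·(v + v̄), cos θ·(v − v̄)],[cos θ·(v̄ − v), sin θ·(v + v̄)]]`. -/
noncomputable def fD (θ : ℝ) (v : ℂ) : Matrix (Fin 2) (Fin 2) ℂ :=
  !![(Real.sin θ : ℂ) * (v + starRingEnd ℂ v), (Real.cos θ : ℂ) * (v - starRingEnd ℂ v);
     (Real.cos θ : ℂ) * (starRingEnd ℂ v - v), (Real.sin θ : ℂ) * (v + starRingEnd ℂ v)]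

/-!
Writing `v = x + iy`, one has `-f_D(v) = a·1 + b·σ_y` with `a = -2 sin θ · x`, `b = 2 cos θ · y`
and `σ_y` the Pauli matrix. Its quadratic form is `a‖ξ‖² + 2b·Im(ξ̄₀ξ₁)`, and
`2|Im(ξ̄₀ξ₁)| ≤ ‖ξ‖²` with equality at `ξ = (1, ±i)`, so `-f_D(v)` is positive definite iff
`|b| < a` (its eigenvalues are `a ± b`). For `0 < θ < π/2` this is exactly the sector condition.
-/

open Complex ComplexConjugate

noncomputable def scalarAddPauliY (a b : ℝ) : Matrix (Fin 2) (Fin 2) ℂ :=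
  !![(a : ℂ), -(b * I); b * I, a]

lemma isHermitian_scalarAddPauliY (a b : ℝ) : (scalarAddPauliY a b).IsHermitian := by
  ext i j
  fin_cases i <;> fin_cases j <;> simp [scalarAddPauliY]

lemma dotProduct_scalarAddPauliY_mulVec (a b : ℝ) (x : Fin 2 → ℂ) :
    star x ⬝ᵥ (scalarAddPauliY a b *ᵥ x) =
      ((a * (normSq (x 0) + normSq (x 1)) + 2 * b * (conj (x 0) * x 1).im : ℝ) : ℂ) := by
  apply Complex.ext <;>
    simp [scalarAddPauliY, mulVec, dotProduct, Fin.sum_univ_two, normSq_apply] <;> ring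

lemma abs_two_mul_im_conj_mul_le (z w : ℂ) : |2 * (conj z * w).im| ≤ normSq z + normSq w := by
  rw [normSq_eq_norm_sq, normSq_eq_norm_sq, abs_mul, abs_two]
  calc 2 * |(conj z * w).im| ≤ 2 * (‖z‖ * ‖w‖) := by
        gcongr
        simpa using abs_im_le_norm (conj z * w)
    _ ≤ ‖z‖ ^ 2 + ‖w‖ ^ 2 := by linarith [two_mul_le_add_sq ‖z‖ ‖w‖]

lemma normSq_add_normSq_pos {x : Fin 2 → ℂ} (hx : x ≠ 0) : 0 < normSq (x 0) + normSq (x 1) := by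
  by_contra! h
  have h0 : x 0 = 0 := normSq_eq_zero.mp (by linarith [normSq_nonneg (x 0), normSq_nonneg (x 1)])
  have h1 : x 1 = 0 := normSq_eq_zero.mp (by linarith [normSq_nonneg (x 0), normSq_nonneg (x 1)])
  exact hx (funext fun i => by fin_cases i <;> assumption)

lemma posDef_scalarAddPauliY_iff (a b : ℝ) : (scalarAddPauliY a b).PosDef ↔ |b| < a := by
  constructor
  · intro h
    have hpos (c : ℝ) (hc : c ^ 2 = 1) : 0 < a + b * c := by
      have hx : ![1, c * I] ≠ 0 := fun hx => by simpa using congrFun hx 0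
      have := h.dotProduct_mulVec_pos hx
      rw [dotProduct_scalarAddPauliY_mulVec, zero_lt_real] at this
      simp only [Matrix.cons_val_zero, Matrix.cons_val_one, map_one, one_mul, mul_one,
        normSq_mul, normSq_I, normSq_ofReal, mul_im, I_re, I_im, ofReal_re, ofReal_im,
        ← sq, hc] at this
      linarith
    rw [abs_lt]
    constructor <;> linarith [hpos 1 (by norm_num), hpos (-1) (by norm_num)]
  · intro hab
    refine PosDef.of_dotProduct_mulVec_pos (isHermitian_scalarAddPauliY a b) fun x hx => ?_
    rw [dotProduct_scalarAddPauliY_mulVec, zero_lt_real]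
    have hN := normSq_add_normSq_pos hx
    have hcross : |b * (2 * (conj (x 0) * x 1).im)| ≤ |b| * (normSq (x 0) + normSq (x 1)) := by
      rw [abs_mul]
      exact mul_le_mul_of_nonneg_left (abs_two_mul_im_conj_mul_le _ _) (abs_nonneg b)
    linarith [mul_lt_mul_of_pos_right hab hN, neg_abs_le (b * (2 * (conj (x 0) * x 1).im))]

lemma neg_fD (θ : ℝ) (v : ℂ) :
    -fD θ v = scalarAddPauliY (-(2 * Real.sin θ * v.re)) (2 * Real.cos θ * v.im) := by
  ext i j
  fin_cases i <;> fin_cases j <;> simp [fD, scalarAddPauliY, Complex.ext_iff] <;> ring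

/-- For `θ ∈ (0, π/2)` and `v ∈ ℂ`, the matrix `f_D(v)` is Hermitian, and it
is negative definite iff `Re v < 0` and `cos θ·|Im v| < sin θ·|Re v|`, i.e. iff `v` lies in
the open conic sector `D_θ` with apex at the origin and inner angle `2θ`. -/
theorem stmt_9 (θ : ℝ) (hθ₁ : 0 < θ) (hθ₂ : θ < Real.pi / 2) (v : ℂ) :
    (fD θ v).IsHermitian ∧
    ((-(fD θ v)).PosDef ↔ v.re < 0 ∧ Real.cos θ * |v.im| < Real.sin θ * |v.re|) := by
  have hs : 0 < Real.sin θ := Real.sin_pos_of_pos_of_lt_pi hθ₁ (by linarith [Real.pi_pos])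
  have hc : 0 < Real.cos θ := Real.cos_pos_of_mem_Ioo ⟨by linarith [Real.pi_pos], hθ₂⟩
  refine ⟨?_, ?_⟩
  · rw [← neg_neg (fD θ v), neg_fD]
    exact (isHermitian_scalarAddPauliY _ _).neg
  rw [neg_fD, posDef_scalarAddPauliY_iff, abs_mul, abs_mul, abs_of_pos hc, abs_two]
  constructor
  · intro h
    have hre : v.re < 0 := by nlinarith [abs_nonneg v.im]
    exact ⟨hre, by rw [abs_of_neg hre]; linarith⟩
  · rintro ⟨hre, h⟩
    rw [abs_of_neg hre] at h
    linarith
end
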